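/- arXiv:2605.13071 — 4 statements merged into one kernel-verified Lean document; each statement's English description precedes it below -/
import Mathlib

section
/- Let μ, ρ > 0 and κ > 0 satisfy √(κ(2ρ² + 2ρμ + κ)) > ρ². Define x* = −ρ² + √(κ(2ρ² + 2ρμ + κ)) and M(x) = (ρ² + x)/((μρ + κ − x)² + (μ+ρ)²x). Then M(x) < M(x*) for every x ≥ 0 with x ≠ x*; that is, x* is the unique global maximizer of M on [0, ∞). -/
theorem stmt2 (μ ρ κ : ℝ) (hμ : 0 < μ) (hρ : 0 < ρ) (hκ : 0 < κ)
    (hcond : ρ^2 < Real.sqrt (κ*(2*ρ^2 + 2*ρ*μ + κ)))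
    (xstar : ℝ) (hx : xstar = -ρ^2 + Real.sqrt (κ*(2*ρ^2 + 2*ρ*μ + κ)))
    (M : ℝ → ℝ)
    (hM : ∀ x : ℝ, M x = (ρ^2 + x) / ((μ*ρ + κ - x)^2 + (μ+ρ)^2 * x)) :
    ∀ x : ℝ, 0 ≤ x → x ≠ xstar → M x < M xstar := by
  intro x hx0 hxne
  set s := Real.sqrt (κ*(2*ρ^2 + 2*ρ*μ + κ)) with hs
  have hK : 0 ≤ κ*(2*ρ^2 + 2*ρ*μ + κ) := by positivity
  have hs2 : s^2 = κ*(2*ρ^2 + 2*ρ*μ + κ) := Real.sq_sqrt hK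
  have hxs0 : 0 < xstar := by rw [hx]; linarith
  have Dpos : ∀ y : ℝ, 0 ≤ y → 0 < (μ*ρ + κ - y)^2 + (μ+ρ)^2 * y := by
    intro y hy
    rcases hy.eq_or_lt with h | h
    · subst h; simp; positivity
    · have : 0 < (μ+ρ)^2 * y := by positivity
      nlinarith [sq_nonneg (μ*ρ + κ - y)]
  have h1 := Dpos x hx0
  have h2 := Dpos xstar hxs0.le
  rw [hM x, hM xstar, div_lt_div_iff₀ h1 h2]
  have hne := sub_ne_zero.mpr hxne
  have hsq : 0 < (x - xstar)^2 := by positivity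
  have key : (ρ^2 + xstar) * ((μ*ρ + κ - x)^2 + (μ+ρ)^2 * x)
      - (ρ^2 + x) * ((μ*ρ + κ - xstar)^2 + (μ+ρ)^2 * xstar)
      = (ρ^2 + xstar) * (x - xstar)^2 := by
    subst hx
    linear_combination (x + ρ^2 - s) * hs2
  nlinarith [mul_pos (by nlinarith [sq_nonneg ρ] : (0:ℝ) < ρ^2 + xstar) hsq]
end

section
/- Let λ ∈ (0,1), let φ: ℝ → ℝ be differentiable with group delay τ_A(ω) = −φ'(ω) ≥ 0, and define G(ω) = (1−λ) + λ e^{jφ(ω)}. Then whenever G(ω) ≠ 0, the group delay of G satisfies τ_G(ω) = λ(λ + (1−λ)cos φ(ω)) / (λ² + (1−λ)² + 2λ(1−λ)cos φ(ω)) · τ_A(ω). -/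
/-!
If `G = |G| e^{iψ}` then `G e^{-iψ}` is real, and differentiating its imaginary part gives
`ψ' |G|² = Im (G' · conj G)` without any differentiability of `|G|`. For
`G = (1 - λ) + λ e^{iφ}` one has `G' = iλφ' e^{iφ}`, so `Im (G' · conj G) = λφ' (λ + (1 - λ) cos φ)`,
and `|G|² = λ² + (1 - λ)² + 2λ(1 - λ) cos φ`; dividing by `|G|² ≠ 0` gives the formula.
-/

open Complex ComplexConjugate Filter Topology

theorem im_deriv_mul_conj_eq_of_polar {G : ℝ → ℂ} {G' : ℂ} {ψ : ℝ → ℝ} {ψ' t : ℝ}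
    (hG : HasDerivAt G G' t) (hψ : HasDerivAt ψ ψ' t)
    (hpolar : ∀ᶠ s in 𝓝 t, G s = (‖G s‖ : ℂ) * exp (I * ψ s)) :
    (G' * conj (G t)).im = ψ' * ‖G t‖ ^ 2 := by
  set E : ℝ → ℂ := fun s => exp (-(I * ψ s))
  have hE : HasDerivAt E (E t * -(I * ψ')) t := (hψ.ofReal_comp.const_mul I).neg.cexp
  have hGE : ∀ s, G s = (‖G s‖ : ℂ) * exp (I * ψ s) → G s * E s = (‖G s‖ : ℂ) := fun s hs => by
    rw [hs, mul_assoc, ← exp_add, add_neg_cancel, exp_zero, mul_one, norm_mul]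
    simp [mul_comm I, norm_exp_ofReal_mul_I]
  -- `G * E` is real-valued near `t`, so the imaginary part of its derivative vanishes.
  have hF := imCLM.hasFDerivAt.comp_hasDerivAt t (hG.mul hE)
  have him : (G' * E t + G t * (E t * -(I * ψ'))).im = 0 :=
    (hF.congr_of_eventuallyEq (hpolar.mono fun s hs => by
      simp [hGE s hs])).unique (hasDerivAt_const t 0)
  have hconj : conj (G t) = ‖G t‖ * E t := by
    conv_lhs => rw [hpolar.self_of_nhds]
    simp [E, ← exp_conj]
  rw [← mul_assoc, hGE t hpolar.self_of_nhds] at him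
  have hIm : (G' * E t).im = ψ' * ‖G t‖ := by
    simp only [add_im, im_ofReal_mul, neg_im, I_mul_im, ofReal_re] at him
    linarith
  rw [hconj, ← mul_assoc, mul_comm G', mul_assoc, im_ofReal_mul, hIm]
  ring

theorem sq_norm_add_mul_exp_I_mul (a b θ : ℝ) :
    ‖(a : ℂ) + b * exp (I * θ)‖ ^ 2 = a ^ 2 + b ^ 2 + 2 * a * b * Real.cos θ := by
  rw [Complex.sq_norm, normSq_apply, mul_comm I, exp_mul_I]
  simp only [← ofReal_cos, ← ofReal_sin, add_re, add_im, mul_re, mul_im, ofReal_re, ofReal_im,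
    I_re, I_im]
  linear_combination b ^ 2 * Real.sin_sq_add_cos_sq θ

theorem hasDerivAt_add_mul_exp_I_mul (a b : ℝ) {φ : ℝ → ℝ} {φ' t : ℝ}
    (hφ : HasDerivAt φ φ' t) :
    HasDerivAt (fun s => (a : ℂ) + b * exp (I * φ s)) (b * (exp (I * φ t) * (I * φ'))) t :=
  ((hφ.ofReal_comp.const_mul I).cexp.const_mul _).const_add _

theorem im_mul_exp_I_mul_mul_conj (a b θ c : ℝ) :
    (b * (exp (I * θ) * (I * c)) * conj ((a : ℂ) + b * exp (I * θ))).im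
      = b * c * (b + a * Real.cos θ) := by
  rw [mul_comm I, exp_mul_I]
  simp only [← ofReal_cos, ← ofReal_sin, map_add, map_mul, conj_ofReal, conj_I, add_re, add_im,
    mul_re, mul_im, ofReal_re, ofReal_im, I_re, I_im, neg_re, neg_im]
  linear_combination b ^ 2 * c * Real.sin_sq_add_cos_sq θ

theorem stmt10_general (lam : ℝ)
    (φ φ' ψ ψ' : ℝ → ℝ)
    (hφ : ∀ ω, HasDerivAt φ (φ' ω) ω)
    (G : ℝ → ℂ)
    (hG : ∀ ω, G ω = ((1 - lam : ℝ) : ℂ) + (lam : ℂ) * Complex.exp (Complex.I * (φ ω : ℂ)))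
    (hψ : ∀ ω, HasDerivAt ψ (ψ' ω) ω)
    (hrep : ∀ ω, G ω = ((‖G ω‖ : ℝ) : ℂ) * Complex.exp (Complex.I * (ψ ω : ℂ))) :
    ∀ ω : ℝ, G ω ≠ 0 →
      -ψ' ω =
        lam * (lam + (1 - lam) * Real.cos (φ ω)) /
          (lam^2 + (1 - lam)^2 + 2*lam*(1 - lam)*Real.cos (φ ω)) * (-φ' ω) := by
  intro ω hGω
  have hGderiv : HasDerivAt G _ ω := funext hG ▸ hasDerivAt_add_mul_exp_I_mul (1 - lam) lam (hφ ω)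
  have key := im_deriv_mul_conj_eq_of_polar hGderiv (hψ ω) (Eventually.of_forall hrep)
  have hnorm : ‖G ω‖ ^ 2 = lam ^ 2 + (1 - lam) ^ 2 + 2 * lam * (1 - lam) * Real.cos (φ ω) := by
    rw [hG ω, sq_norm_add_mul_exp_I_mul]
    ring
  rw [hG ω, im_mul_exp_I_mul_mul_conj, ← hG ω, hnorm] at key
  have hpos : 0 < lam ^ 2 + (1 - lam) ^ 2 + 2 * lam * (1 - lam) * Real.cos (φ ω) := by
    rw [← hnorm]
    positivity
  rw [div_mul_eq_mul_div, eq_div_iff hpos.ne']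
  linear_combination key

theorem stmt10 (lam : ℝ) (hlam : lam ∈ Set.Ioo (0 : ℝ) 1)
    (φ φ' ψ ψ' : ℝ → ℝ)
    (hφ : ∀ ω, HasDerivAt φ (φ' ω) ω)
    (hτA : ∀ ω, 0 ≤ -φ' ω)
    (G : ℝ → ℂ)
    (hG : ∀ ω, G ω = ((1 - lam : ℝ) : ℂ) + (lam : ℂ) * Complex.exp (Complex.I * (φ ω : ℂ)))
    (hψ : ∀ ω, HasDerivAt ψ (ψ' ω) ω)
    (hrep : ∀ ω, G ω = ((‖G ω‖ : ℝ) : ℂ) * Complex.exp (Complex.I * (ψ ω : ℂ))) :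
    ∀ ω : ℝ, G ω ≠ 0 →
      -ψ' ω =
        lam * (lam + (1 - lam) * Real.cos (φ ω)) /
          (lam^2 + (1 - lam)^2 + 2*lam*(1 - lam)*Real.cos (φ ω)) * (-φ' ω) :=
  stmt10_general lam φ φ' ψ ψ' hφ G hG hψ hrep
end

section
/- Let λ ∈ (0,1), φ ∈ ℝ with the denominator λ² + (1−λ)² + 2λ(1−λ)cos φ > 0, and τ_A > 0. Then the mixed group delay τ_G = λ(λ + (1−λ)cos φ)/(λ² + (1−λ)² + 2λ(1−λ)cos φ) · τ_A is strictly negative if and only if λ < 1/2 and cos φ < −λ/(1−λ). -/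
theorem stmt11 (lam φ τA : ℝ) (hlam : lam ∈ Set.Ioo (0 : ℝ) 1)
    (hden : 0 < lam^2 + (1 - lam)^2 + 2*lam*(1 - lam)*Real.cos φ)
    (hτA : 0 < τA) :
    (lam * (lam + (1 - lam) * Real.cos φ) /
        (lam^2 + (1 - lam)^2 + 2*lam*(1 - lam)*Real.cos φ) * τA < 0) ↔
      (lam < 1/2 ∧ Real.cos φ < -lam / (1 - lam)) := by
  obtain ⟨h0, h1⟩ := hlam
  have h1l : 0 < 1 - lam := by linarith
  have hkey : (lam * (lam + (1 - lam) * Real.cos φ) /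
        (lam^2 + (1 - lam)^2 + 2*lam*(1 - lam)*Real.cos φ) * τA < 0) ↔
      lam + (1 - lam) * Real.cos φ < 0 := by
    rw [mul_neg_iff]
    constructor
    · rintro (⟨_, h⟩ | ⟨h, _⟩)
      · linarith
      · rcases div_neg_iff.mp h with ⟨_, hd⟩ | ⟨hn, _⟩
        · linarith
        · nlinarith
    · intro h
      right
      refine ⟨div_neg_of_neg_of_pos ?_ hden, hτA⟩
      nlinarith
  rw [hkey]
  constructor
  · intro h
    have hc := Real.neg_one_le_cos φ
    constructor
    · nlinarith
    · rw [lt_div_iff₀ h1l]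
      nlinarith
  · rintro ⟨hlt, hc⟩
    rw [lt_div_iff₀ h1l] at hc
    nlinarith
end

section
/- Let 0 < μ̄ < 1, 0 < ρ̄ < 1, and κ̄ > 0, and define M(x) = (1 + ρ̄² − 2ρ̄x) / (1 + (κ̄ − μ̄ − ρ̄)² + μ̄²ρ̄² − 2μ̄ρ̄ + 2(κ̄ − μ̄ − ρ̄)(1 + μ̄ρ̄)x + 4μ̄ρ̄x²) for x ∈ (−1, 1). Then any interior stationary point of M satisfies 4μ̄ρ̄²x² − 4μ̄ρ̄(1 + ρ̄²)x + μ̄(1 + ρ̄²)² − κ̄((1 − ρ̄²)(1 − μ̄ρ̄) + κ̄ρ̄) = 0. -/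
theorem stmt14 (mu rho kap : ℝ) (hmu : mu ∈ Set.Ioo (0 : ℝ) 1)
    (hrho : rho ∈ Set.Ioo (0 : ℝ) 1) (hkap : 0 < kap)
    (M : ℝ → ℝ)
    (hM : ∀ x ∈ Set.Ioo (-1 : ℝ) 1,
      M x = (1 + rho^2 - 2*rho*x) /
        (1 + (kap - mu - rho)^2 + mu^2*rho^2 - 2*mu*rho
          + 2*(kap - mu - rho)*(1 + mu*rho)*x + 4*mu*rho*x^2)) :
    ∀ x ∈ Set.Ioo (-1 : ℝ) 1, deriv M x = 0 →
      4*mu*rho^2*x^2 - 4*mu*rho*(1 + rho^2)*x + mu*(1 + rho^2)^2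
        - kap*((1 - rho^2)*(1 - mu*rho) + kap*rho) = 0 := by
  intro x hx hder
  obtain ⟨hmu1, hmu2⟩ := hmu
  obtain ⟨hrho1, hrho2⟩ := hrho
  obtain ⟨hx1, hx2⟩ := hx
  set N : ℝ → ℝ := fun y => 1 + rho^2 - 2*rho*y with hNdef
  set D : ℝ → ℝ := fun y => 1 + (kap - mu - rho)^2 + mu^2*rho^2 - 2*mu*rho
      + 2*(kap - mu - rho)*(1 + mu*rho)*y + 4*mu*rho*y^2 with hDdef
  have hDx : 0 < D x := by
    have h1 : (0:ℝ) < 1 - x^2 := by nlinarith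
    have h2 : (0:ℝ) < 1 - mu*rho := by nlinarith
    have hEq : D x = (x*(1+mu*rho)+(kap-mu-rho))^2 + (1-x^2)*(1-mu*rho)^2 := by
      simp only [hDdef]; ring
    nlinarith [sq_nonneg (x*(1+mu*rho)+(kap-mu-rho)), mul_pos h1 (mul_pos h2 h2)]
  have hN : HasDerivAt N (-(2*rho)) x := by
    have h := ((hasDerivAt_id x).const_mul (2*rho)).const_sub (1 + rho^2)
    simpa using h
  have hD : HasDerivAt D (2*(kap - mu - rho)*(1 + mu*rho) + 4*mu*rho*(2*x)) x := by
    have hq : HasDerivAt (fun y:ℝ => y^2) (2*x) x := by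
      simpa using hasDerivAt_pow 2 x
    have h := (((hasDerivAt_id x).const_mul
        (2*(kap - mu - rho)*(1 + mu*rho))).add (hq.const_mul (4*mu*rho))).const_add
        (1 + (kap - mu - rho)^2 + mu^2*rho^2 - 2*mu*rho)
    simpa [hDdef, mul_comm, mul_assoc, mul_left_comm, add_assoc] using h
  have hf : HasDerivAt (fun y => N y / D y)
      ((-(2*rho) * D x - N x * (2*(kap - mu - rho)*(1 + mu*rho) + 4*mu*rho*(2*x)))
        / (D x)^2) x := hN.div hD (ne_of_gt hDx)
  have heq : M =ᶠ[nhds x] fun y => N y / D y := by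
    filter_upwards [isOpen_Ioo.mem_nhds (Set.mem_Ioo.mpr ⟨hx1, hx2⟩)] with y hy
    exact hM y hy
  have hderiv : deriv M x = (-(2*rho) * D x - N x * (2*(kap - mu - rho)*(1 + mu*rho)
      + 4*mu*rho*(2*x))) / (D x)^2 := by
    rw [heq.deriv_eq, hf.deriv]
  rw [hderiv] at hder
  have hnum : -(2*rho) * D x - N x * (2*(kap - mu - rho)*(1 + mu*rho)
      + 4*mu*rho*(2*x)) = 0 := by
    have h2 : (D x)^2 ≠ 0 := pow_ne_zero 2 (ne_of_gt hDx)
    field_simp at hder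
    linarith [hder]
  have hkey : -(2*rho) * D x - N x * (2*(kap - mu - rho)*(1 + mu*rho)
      + 4*mu*rho*(2*x)) = 2 * (4*mu*rho^2*x^2 - 4*mu*rho*(1 + rho^2)*x + mu*(1 + rho^2)^2
        - kap*((1 - rho^2)*(1 - mu*rho) + kap*rho)) := by
    simp only [hNdef, hDdef]; ring
  linarith [hkey.symm.trans hnum]
end
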